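/- Every play of the formula size game FS^Π_k(𝔸,𝔹) is finite. -/

import Mathlib

/-! ## Core: Kripke models, GGMSC schemata and programs -/

structure Kripke (W : Type) (P : Type) where
  R : W → W → Prop
  V : W → P → Prop

/-- Schemata of graded modal substitution calculus with the counting global
modality (GGMSC), over proposition symbols `P` and schema variables `T`.
`dia k` is `◇_{≥k}`, `box k` is `□_{<k}`, `gdia k` is `⟨E⟩_{≥k}` and
`gbox k` is `[E]_{<k}`. -/
inductive Schema (P : Type) (T : Type) : Type where
  | bot | top
  | prop (p : P)
  | var (X : T)
  | neg (φ : Schema P T)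
  | or (φ ψ : Schema P T)
  | and (φ ψ : Schema P T)
  | dia (k : ℕ) (φ : Schema P T)
  | box (k : ℕ) (φ : Schema P T)
  | gdia (k : ℕ) (φ : Schema P T)
  | gbox (k : ℕ) (φ : Schema P T)

/-- Formulae of graded modal logic with the counting global modality (GGML):
schemata with no schema variables. -/
abbrev GGFormula (P : Type) : Type := Schema P Empty

namespace Schema

def ofFormula {P T : Type} : GGFormula P → Schema P T
  | .bot => .bot
  | .top => .top
  | .prop p => .prop p
  | .var X => X.elim
  | .neg φ => .neg (ofFormula φ)
  | .or φ ψ => .or (ofFormula φ) (ofFormula ψ)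
  | .and φ ψ => .and (ofFormula φ) (ofFormula ψ)
  | .dia k φ => .dia k (ofFormula φ)
  | .box k φ => .box k (ofFormula φ)
  | .gdia k φ => .gdia k (ofFormula φ)
  | .gbox k φ => .gbox k (ofFormula φ)

/-- Truth of a `(P,T)`-schema in a Kripke model `M` at node `w`, where the
schema variables are interpreted by the labeling `g`. -/
def Sat {W P T : Type} (M : Kripke W P) (g : W → T → Prop) : W → Schema P T → Prop
  | _, .bot => False
  | _, .top => True
  | w, .prop p => M.V w p
  | w, .var X => g w X
  | w, .neg φ => ¬ Sat M g w φ
  | w, .or φ ψ => Sat M g w φ ∨ Sat M g w ψ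
  | w, .and φ ψ => Sat M g w φ ∧ Sat M g w ψ
  | w, .dia k φ => ∃ f : Fin k → W, Function.Injective f ∧ ∀ i, M.R w (f i) ∧ Sat M g (f i) φ
  | w, .box k φ => ¬ ∃ f : Fin k → W, Function.Injective f ∧ ∀ i, M.R w (f i) ∧ ¬ Sat M g (f i) φ
  | w, .gdia k φ => ∃ f : Fin k → W, Function.Injective f ∧ ∀ i, Sat M g (f i) φ
  | w, .gbox k φ => ¬ ∃ f : Fin k → W, Function.Injective f ∧ ∀ i, ¬ Sat M g (f i) φ

/-- Size of a schema: the number of proposition symbols, schema variables,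
negations and binary connectives, plus the counting thresholds of all
diamonds and boxes. -/
def size {P T : Type} : Schema P T → ℕ
  | .bot => 0
  | .top => 0
  | .prop _ => 1
  | .var _ => 1
  | .neg φ => size φ + 1
  | .or φ ψ => size φ + size ψ + 1
  | .and φ ψ => size φ + size ψ + 1
  | .dia k φ => size φ + k
  | .box k φ => size φ + k
  | .gdia k φ => size φ + k
  | .gbox k φ => size φ + k

/-- Strong negation normal form: the only negated subschemata are negated
proposition symbols. -/
def SNNF {P T : Type} : Schema P T → Prop
  | .neg (.prop _) => True
  | .neg _ => False
  | .or φ ψ => SNNF φ ∧ SNNF ψ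
  | .and φ ψ => SNNF φ ∧ SNNF ψ
  | .dia _ φ => SNNF φ
  | .box _ φ => SNNF φ
  | .gdia _ φ => SNNF φ
  | .gbox _ φ => SNNF φ
  | _ => True

/-- A schema of `MSC`: only non-graded local diamonds and boxes. -/
def IsMSC {P T : Type} : Schema P T → Prop
  | .neg φ => IsMSC φ
  | .or φ ψ => IsMSC φ ∧ IsMSC ψ
  | .and φ ψ => IsMSC φ ∧ IsMSC ψ
  | .dia k φ => k = 1 ∧ IsMSC φ
  | .box k φ => k = 1 ∧ IsMSC φ
  | .gdia _ _ => False
  | .gbox _ _ => False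
  | _ => True

/-- A schema of `SC`: no diamonds or boxes at all. -/
def IsSC {P T : Type} : Schema P T → Prop
  | .neg φ => IsSC φ
  | .or φ ψ => IsSC φ ∧ IsSC ψ
  | .and φ ψ => IsSC φ ∧ IsSC ψ
  | .dia _ _ => False
  | .box _ _ => False
  | .gdia _ _ => False
  | .gbox _ _ => False
  | _ => True

/-- Modal depth of a schema. -/
def mdepth {P T : Type} : Schema P T → ℕ
  | .neg φ => mdepth φ
  | .or φ ψ => max (mdepth φ) (mdepth ψ)
  | .and φ ψ => max (mdepth φ) (mdepth ψ)
  | .dia _ φ => mdepth φ + 1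
  | .box _ φ => mdepth φ + 1
  | .gdia _ φ => mdepth φ + 1
  | .gbox _ φ => mdepth φ + 1
  | _ => 0

end Schema

/-- A `(P,T)`-program of GGMSC: a base rule (a GGML formula) and an induction
rule (a schema) for each head predicate in `T`, together with a set of
accepting predicates. -/
structure Program (P : Type) (T : Type) where
  base : T → GGFormula P
  rule : T → Schema P T
  acc : Set T

namespace Program

/-- `Λ.stage M n w X` holds iff `M, w ⊨ X^n`, i.e. the head predicate `X` is
true at `w` in round `n` of the run of `Λ` on `M`.  As a function of `w` and
`X` this is the global configuration of `Λ` in round `n`. -/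
def stage {W P T : Type} (Λ : Program P T) (M : Kripke W P) : ℕ → W → T → Prop
  | 0 => fun w X => Schema.Sat M (fun _ (_ : T) => False) w (Schema.ofFormula (Λ.base X))
  | n + 1 => fun w X => Schema.Sat M (Λ.stage M n) w (Λ.rule X)

/-- `Λ` accepts the pointed model `(M,w)`: some accepting predicate becomes
true at `w` in some round. -/
def Accepts {W P T : Type} (Λ : Program P T) (M : Kripke W P) (w : W) : Prop :=
  ∃ n : ℕ, ∃ X ∈ Λ.acc, Λ.stage M n w X

/-- The size of a program: the sum of the sizes of the bodies of all its rules. -/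
def size {P T : Type} [Fintype T] (Λ : Program P T) : ℕ :=
  ∑ X : T, ((Λ.base X).size + (Λ.rule X).size)

/-- A program is in strong negation normal form if all the bodies of its rules are. -/
def SNNFP {P T : Type} (Λ : Program P T) : Prop :=
  ∀ X : T, (Λ.base X).SNNF ∧ (Λ.rule X).SNNF

/-- A program of `MSC`. -/
def IsMSCP {P T : Type} (Λ : Program P T) : Prop :=
  ∀ X : T, (Λ.base X).IsMSC ∧ (Λ.rule X).IsMSC

/-- A program of `SC`. -/
def IsSCP {P T : Type} (Λ : Program P T) : Prop :=
  ∀ X : T, (Λ.base X).IsSC ∧ (Λ.rule X).IsSC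

end Program

/-! ## The formula size game FS^Π_k(𝔸,𝔹) for GGMSC -/

/-- A pointed Kripke model over propositions `P`. -/
structure PModel (P : Type) : Type 1 where
  W : Type
  M : Kripke W P
  pt : W

/-- A clocked pointed model `(M, w, ℓ)`. -/
abbrev CModel (P : Type) : Type 1 := PModel P × ℕ

/-- Node labels of (partial) syntax forests. -/
inductive FSLabel (P : Type) : Type where
  | bot | top
  | prop (p : P)
  | var (X : ℕ)
  | neg | or | and
  | dia (k : ℕ) | box (k : ℕ) | gdia (k : ℕ) | gbox (k : ℕ)

namespace FSLabel

def cost {P : Type} : FSLabel P → ℕ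
  | .dia k => k | .box k => k | .gdia k => k | .gbox k => k
  | _ => 1

def isModal {P : Type} : FSLabel P → Bool
  | .dia _ => true | .box _ => true | .gdia _ => true | .gbox _ => true
  | _ => false

def isSig {P : Type} : FSLabel P → Prop
  | .bot => True | .top => True | .prop _ => True
  | _ => False

end FSLabel

/-- A position of the formula size game: a finite partial syntax forest
(nodes `V`, tree edges `E`, back edges `B`, a partial labeling `lab`, the
head-predicate assignment `rho : node ↦ (variable, isBase)`), the set `U` of
active nodes, and the finite sets of clocked models attached to each node. -/
structure FSPos (P : Type) : Type 1 where
  V : Finset ℕ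
  E : Finset (ℕ × ℕ)
  B : Finset (ℕ × ℕ)
  lab : ℕ → Option (FSLabel P)
  rho : ℕ → ℕ × Bool
  U : Finset ℕ
  left : ℕ → Set (CModel P)
  right : ℕ → Set (CModel P)
  finL : ∀ n, (left n).Finite
  finR : ∀ n, (right n).Finite

namespace FSPos

/-- Size of the partial syntax forest: each non-modal (or unlabeled) node
counts 1, modal nodes count their threshold, and each root counts 1 more. -/
def size {P : Type} (p : FSPos P) : ℕ :=
  (p.V.sum fun v => (p.lab v).elim 1 FSLabel.cost) +
    (p.V.filter fun v => ∀ u ∈ p.V, (u, v) ∉ p.E).card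

/-- The number of diamonds and boxes occurring in the forest. -/
def modalCount {P : Type} (p : FSPos P) : ℕ :=
  (p.V.filter fun v => ((p.lab v).elim false FSLabel.isModal) = true).card

end FSPos

/-- `iter` of a class of clocked models: decrement all (positive) clocks. -/
def iterC {P : Type} (S : Set (CModel P)) : Set (CModel P) :=
  {x | (x.1, x.2 + 1) ∈ S}

/-- `init` of a class of clocked models: keep the zero-clocked models. -/
def initC {P : Type} (S : Set (CModel P)) : Set (CModel P) :=
  {x | x ∈ S ∧ x.2 = 0}

/-- The successor models of a clocked model. -/
def succsOf {P : Type} (x : CModel P) : Set (CModel P) :=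
  {y | ∃ w' : x.1.W, x.1.M.R x.1.pt w' ∧ y = (⟨x.1.W, x.1.M, w'⟩, x.2)}

/-- All pointed models obtained from a clocked model (for global modalities). -/
def nodesOf {P : Type} (x : CModel P) : Set (CModel P) :=
  {y | ∃ w' : x.1.W, y = (⟨x.1.W, x.1.M, w'⟩, x.2)}

/-- `f` is an (`m`-successor / `m`-global) function on domain `D`:
it assigns to each model of `D` exactly `m` of its `base`-models. -/
def IsMFun {P : Type} (m : ℕ) (D : Set (CModel P))
    (base : CModel P → Set (CModel P)) (f : CModel P → Set (CModel P)) : Prop :=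
  ∀ x ∈ D, f x ⊆ base x ∧ (f x).Finite ∧ (f x).ncard = m

/-- Literal satisfaction, for Sig-moves. -/
def litHolds {P : Type} (μ : FSLabel P) (x : CModel P) : Prop :=
  match μ with
  | .top => True
  | .prop p => x.1.M.V x.1.pt p
  | _ => False

def litSeparates {P : Type} (μ : FSLabel P) (L R : Set (CModel P)) : Prop :=
  (∀ x ∈ L, litHolds μ x) ∧ (∀ x ∈ R, ¬ litHolds μ x)

/-- Samson loses outright: the forest is too big, or some base-rule node
stores a model with positive clock. -/
def samsonLoses {P : Type} (k : ℕ) (p : FSPos P) : Prop :=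
  k < p.size ∨ ∃ v ∈ p.V, (p.rho v).2 = true ∧ ∃ x ∈ p.left v, 0 < x.2

/-- Common part of a move placing one successor node `v'` under `v` with new
attached sets `Lnew`, `Rnew` (either labeling a fresh node, or following the
existing label of `v`, in which case the new sets are joined with the sets
stored at `v'`). -/
def extend1 {P : Type} (p q : FSPos P) (v v' : ℕ) (μ : FSLabel P)
    (Lnew Rnew : Set (CModel P)) : Prop :=
  v' ≠ v ∧
  ((p.lab v = none ∧ v' ∉ p.V ∧ q.V = insert v' p.V ∧ q.E = insert (v, v') p.E ∧
      q.lab = Function.update p.lab v (some μ) ∧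
      q.rho = Function.update p.rho v' (p.rho v)) ∨
    (p.lab v = some μ ∧ (v, v') ∈ p.E ∧ q.V = p.V ∧ q.E = p.E ∧
      q.lab = p.lab ∧ q.rho = p.rho)) ∧
  q.B = p.B ∧
  q.U = insert v' (p.U.erase v) ∧
  q.left = Function.update (Function.update p.left v ∅) v' (Lnew ∪ p.left v') ∧
  q.right = Function.update (Function.update p.right v ∅) v' (Rnew ∪ p.right v')

/-- Common part of a binary (∨/∧) move with successor nodes `v1`, `v2`. -/
def extend2 {P : Type} (p q : FSPos P) (v v1 v2 : ℕ) (μ : FSLabel P)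
    (L1 L2 R1 R2 : Set (CModel P)) : Prop :=
  v1 ≠ v2 ∧ v1 ≠ v ∧ v2 ≠ v ∧
  ((p.lab v = none ∧ v1 ∉ p.V ∧ v2 ∉ p.V ∧ q.V = insert v1 (insert v2 p.V) ∧
      q.E = insert (v, v1) (insert (v, v2) p.E) ∧
      q.lab = Function.update p.lab v (some μ) ∧
      q.rho = Function.update (Function.update p.rho v1 (p.rho v)) v2 (p.rho v)) ∨
    (p.lab v = some μ ∧ (v, v1) ∈ p.E ∧ (v, v2) ∈ p.E ∧ q.V = p.V ∧ q.E = p.E ∧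
      q.lab = p.lab ∧ q.rho = p.rho)) ∧
  q.B = p.B ∧
  q.U = insert v1 (insert v2 (p.U.erase v)) ∧
  q.left = Function.update (Function.update (Function.update p.left v ∅)
      v1 (L1 ∪ p.left v1)) v2 (L2 ∪ p.left v2) ∧
  q.right = Function.update (Function.update (Function.update p.right v ∅)
      v1 (R1 ∪ p.right v1)) v2 (R2 ∪ p.right v2)

/-- Common part of an `X`-move with target node `v'` (pointed to by a new
back edge); `isBase` records whether the move was challenged. -/
def extendX {P : Type} (p q : FSPos P) (v v' : ℕ) (X : ℕ) (isBase : Bool)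
    (Lv' Rv' Lv Rv : Set (CModel P)) : Prop :=
  v' ≠ v ∧
  ((v' ∈ p.V ∧ p.rho v' = (X, isBase) ∧ q.V = p.V ∧ q.rho = p.rho) ∨
    (v' ∉ p.V ∧ q.V = insert v' p.V ∧ q.rho = Function.update p.rho v' (X, isBase))) ∧
  q.E = p.E ∧ q.B = insert (v, v') p.B ∧
  q.lab = Function.update p.lab v (some (.var X)) ∧
  q.U = insert v' (p.U.erase v) ∧
  q.left = Function.update (Function.update p.left v Lv) v' Lv' ∧
  q.right = Function.update (Function.update p.right v Rv) v' Rv'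

/-- The four kinds of modal moves. -/
inductive ModKind : Type where
  | dia | box | gdia | gbox
deriving DecidableEq

def ModKind.label {P : Type} : ModKind → ℕ → FSLabel P
  | .dia, m => .dia m
  | .box, m => .box m
  | .gdia, m => .gdia m
  | .gbox, m => .gbox m

/-- Is the move a local (successor) move? -/
def ModKind.isLocal : ModKind → Bool
  | .dia => true | .box => true | _ => false

/-- Does Samson give his `m`-function on the left class (◇, ⟨E⟩) or on the
right class (□, [E])? -/
def ModKind.samsonLeft : ModKind → Bool
  | .dia => true | .gdia => true | _ => false

def ModKind.baseFun {P : Type} (mk : ModKind) : CModel P → Set (CModel P) :=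
  if mk.isLocal then succsOf else nodesOf

/-- Game positions of the formula size game, including the intermediate
micro-positions inside a single move.  `win b` means the play has ended, with
Samson the winner iff `b = true`. -/
inductive GPos (P : Type) : Type 1 where
  | start : GPos P
  | clockS (A' : Set (PModel P)) : GPos P
  | chooseB (cA : Set (CModel P)) : GPos P
  | setup (cA cB : Set (CModel P)) : GPos P
  | main (p : FSPos P) : GPos P
  | atNode (p : FSPos P) (v : ℕ) : GPos P
  | modalD (p : FSPos P) (v v' : ℕ) (mk : ModKind) (m : ℕ)
      (f : CModel P → Set (CModel P)) : GPos P
  | modalS (p : FSPos P) (v v' : ℕ) (mk : ModKind) (m : ℕ)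
      (f : CModel P → Set (CModel P)) (D : Set (CModel P))
      (h : CModel P → Set (CModel P)) (chosen : Set (CModel P)) : GPos P
  | xchal (p : FSPos P) (v : ℕ) (X : ℕ) : GPos P
  | win (samson : Bool) : GPos P

/-- Whose turn it is (`true` = Samson). -/
def GPos.turn {P : Type} : GPos P → Bool
  | .start => false
  | .clockS _ => true
  | .chooseB _ => false
  | .setup _ _ => true
  | .main _ => false
  | .atNode _ _ => true
  | .modalD _ _ _ _ _ _ => false
  | .modalS _ _ _ _ _ _ _ _ _ => true
  | .xchal _ _ _ => false
  | .win _ => false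

/-- The moves of the formula size game `FS^Π_k(𝔸,𝔹)`. -/
inductive gstep {P : Type} (k : ℕ) (A B : Set (PModel P)) : GPos P → GPos P → Prop where
  /- Delilah chooses a finite subset `𝔸' ⊆ 𝔸`. -/
  | start (A' : Set (PModel P)) (hsub : A' ⊆ A) (hfin : A'.Finite) :
      gstep k A B .start (.clockS A')
  /- Samson assigns a clock to each chosen left model. -/
  | clock (A' : Set (PModel P)) (c : PModel P → ℕ) :
      gstep k A B (.clockS A') (.chooseB {x | x.1 ∈ A' ∧ x.2 = c x.1})
  /- Delilah chooses a finite set of clocked models from `𝔹`. -/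
  | chooseB (cA cB : Set (CModel P)) (hsub : ∀ x ∈ cB, x.1 ∈ B) (hfin : cB.Finite) :
      gstep k A B (.chooseB cA) (.setup cA cB)
  /- Samson sets up the initial position: a discrete forest whose nodes come
     in base/iter pairs per head predicate, the left models distributed over
     the nodes, and the right sets induced by `cB` and `rho`. -/
  | setup (cA cB : Set (CModel P)) (p : FSPos P)
      (hU : p.U = p.V) (hE : p.E = ∅) (hB : p.B = ∅) (hlab : ∀ n, p.lab n = none)
      (hpair : ∀ v ∈ p.U, ∃ u ∈ p.U,
        (p.rho u).1 = (p.rho v).1 ∧ (p.rho u).2 = !(p.rho v).2)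
      (hleft1 : ∀ v, p.left v ⊆ cA)
      (hleft2 : ∀ x ∈ cA, ∃ v ∈ p.U, x ∈ p.left v)
      (hleft3 : ∀ v ∉ p.U, p.left v = ∅)
      (hright1 : ∀ v ∈ p.U, p.right v = if (p.rho v).2 then cB else initC cB)
      (hright2 : ∀ v ∉ p.U, p.right v = ∅) :
      gstep k A B (.setup cA cB) (.main p)
  /- Samson loses if the forest got too large or a base node stores a
     positively clocked model. -/
  | samsonLoses (p : FSPos P) (h : samsonLoses k p) :
      gstep k A B (.main p) (.win false)
  /- Delilah chooses an active node. -/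
  | pick (p : FSPos P) (v : ℕ) (hv : v ∈ p.U) (h : ¬ samsonLoses k p) :
      gstep k A B (.main p) (.atNode p v)
  /- Sig-move: Samson plays a literal; the play ends, and Samson wins iff the
     literal separates the attached sets. -/
  | sigMove (p : FSPos P) (v : ℕ) (μ : FSLabel P) (b : Bool) (hsig : μ.isSig)
      (hcompat : p.lab v = none ∨ p.lab v = some μ)
      (hb : b = true ↔ litSeparates μ (p.left v) (p.right v)) :
      gstep k A B (.atNode p v) (.win b)
  /- ¬-move: swap the sets. -/
  | negMove (p q : FSPos P) (v v' : ℕ)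
      (hext : extend1 p q v v' .neg (p.right v) (p.left v)) :
      gstep k A B (.atNode p v) (.main q)
  /- ∨-move: Samson splits the left set. -/
  | orMove (p q : FSPos P) (v v1 v2 : ℕ) (L1 L2 : Set (CModel P))
      (hsplit : L1 ∪ L2 = p.left v)
      (hext : extend2 p q v v1 v2 .or L1 L2 (p.right v) (p.right v)) :
      gstep k A B (.atNode p v) (.main q)
  /- ∧-move: Samson splits the right set. -/
  | andMove (p q : FSPos P) (v v1 v2 : ℕ) (R1 R2 : Set (CModel P))
      (hsplit : R1 ∪ R2 = p.right v)
      (hext : extend2 p q v v1 v2 .and (p.left v) (p.left v) R1 R2) :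
      gstep k A B (.atNode p v) (.main q)
  /- Modal move, part 1: Samson chooses the kind, the threshold `m ≥ 1`, the
     target node and an `m`-function on his class. -/
  | modalMoveS (p : FSPos P) (v v' : ℕ) (mk : ModKind) (m : ℕ)
      (f : CModel P → Set (CModel P)) (hm : 0 < m)
      (hcompat : p.lab v = none ∨ p.lab v = some (mk.label m))
      (hf : IsMFun m (if mk.samsonLeft then p.left v else p.right v) mk.baseFun f) :
      gstep k A B (.atNode p v) (.modalD p v v' mk m f)
  /- Modal move, part 2: Delilah gives a partial `m`-function on the other
     class and chooses a finite subset of the models offered by `f`. -/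
  | modalMoveD (p : FSPos P) (v v' : ℕ) (mk : ModKind) (m : ℕ)
      (f : CModel P → Set (CModel P)) (D : Set (CModel P))
      (h : CModel P → Set (CModel P)) (chosen : Set (CModel P))
      (hD : D ⊆ (if mk.samsonLeft then p.right v else p.left v))
      (hh : IsMFun m D mk.baseFun h)
      (hchfin : chosen.Finite)
      (hch : chosen ⊆ ⋃ x ∈ (if mk.samsonLeft then p.left v else p.right v), f x) :
      gstep k A B (.modalD p v v' mk m f) (.modalS p v v' mk m f D h chosen)
  /- Modal move, part 3: Samson answers with nonempty finite subsets of the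
     sets offered by Delilah's partial function, and the move is completed. -/
  | modalMoveS2 (p q : FSPos P) (v v' : ℕ) (mk : ModKind) (m : ℕ)
      (f : CModel P → Set (CModel P)) (D : Set (CModel P))
      (h : CModel P → Set (CModel P)) (chosen : Set (CModel P))
      (r : CModel P → Set (CModel P))
      (hr : ∀ y ∈ D, r y ⊆ h y ∧ (r y).Finite ∧ (r y).Nonempty)
      (hext : extend1 p q v v' (mk.label m)
        (if mk.samsonLeft then chosen else ⋃ y ∈ D, r y)
        (if mk.samsonLeft then ⋃ y ∈ D, r y else chosen)) :
      gstep k A B (.modalS p v v' mk m f D h chosen) (.main q)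
  /- X-move: Samson chooses a head predicate (not allowed inside a base
     rule); then Delilah decides whether to challenge. -/
  | xMove (p : FSPos P) (v : ℕ) (X : ℕ)
      (hiter : (p.rho v).2 = false)
      (hcompat : p.lab v = none ∨ p.lab v = some (.var X)) :
      gstep k A B (.atNode p v) (.xchal p v X)
  /- If Delilah does not challenge and both iterated sets are empty, Samson
     wins. -/
  | xWin (p : FSPos P) (v : ℕ) (X : ℕ)
      (h1 : iterC (p.left v) = ∅) (h2 : iterC (p.right v) = ∅) :
      gstep k A B (.xchal p v X) (.win true)
  /- Delilah does not challenge: the clocks are decremented, the zero-clocked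
     models stay at `v`, and the play moves to the iter-node of `X`. -/
  | xNoChal (p q : FSPos P) (v v' : ℕ) (X : ℕ)
      (hne : ¬ (iterC (p.left v) = ∅ ∧ iterC (p.right v) = ∅))
      (hext : extendX p q v v' X false
        (iterC (p.left v) ∪ p.left v') (iterC (p.right v) ∪ p.right v')
        (initC (p.left v)) (initC (p.right v))) :
      gstep k A B (.xchal p v X) (.main q)
  /- Delilah challenges: a fresh base node for `X` is created, with the
     zero-clocked models. -/
  | xChal (p q : FSPos P) (v v' : ℕ) (X : ℕ) (hfresh : v' ∉ p.V)
      (hext : extendX p q v v' X true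
        (initC (p.left v)) (initC (p.right v)) ∅ ∅) :
      gstep k A B (.xchal p v X) (.main q)

/-- `WinFor k A B who inv g` : the player `who` (`true` = Samson, `false` =
Delilah) has a winning strategy in the formula size game from position `g`,
moreover maintaining the invariant `inv` at every macro position along the
strategy.  (With `inv = fun _ => True` this is an ordinary winning strategy.) -/
inductive WinFor {P : Type} (k : ℕ) (A B : Set (PModel P)) (who : Bool)
    (inv : FSPos P → Prop) : GPos P → Prop where
  | term : WinFor k A B who inv (.win who)
  | opp (g : GPos P) (hturn : g.turn = !who) (hnw : ∀ b, g ≠ .win b)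
      (hinv : ∀ p, g = .main p → inv p)
      (h : ∀ g', gstep k A B g g' → WinFor k A B who inv g') :
      WinFor k A B who inv g
  | mine (g g' : GPos P) (hturn : g.turn = who) (hnw : ∀ b, g ≠ .win b)
      (hinv : ∀ p, g = .main p → inv p)
      (hstep : gstep k A B g g') (h : WinFor k A B who inv g') :
      WinFor k A B who inv g

/-!
The syntax forest only grows along a play, and Delilah may only pick a node while the
forest has at most `k` nodes, so only finitely many moves create new nodes. Any other move
takes the models away from the active node `v` picked by Delilah, leaves behind only models
with clock `0`, and hands the rest to at most two nodes: children of `v`, which have fewer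
descendants, or, in an `X`-move, the target of a back edge, which receives them with their
clocks decreased by one. So the multiset of pairs (maximal clock, number of descendants)
over the active nodes decreases in the multiset ordering; it is encoded as a sum of powers
of `3`.
-/

namespace Relation

variable {α : Type*} {r s : α → α → Prop}

theorem transGen_or_terminal
    (hs : ∀ a b, s a b → r a b ∨ ∀ c, ¬ s b c) {a b : α} (h : TransGen s a b) :
    TransGen r a b ∨ ∀ c, ¬ s b c := by
  induction h with
  | single hab => exact (hs _ _ hab).imp TransGen.single id
  | tail _ hbc ih =>
    rcases ih with ih | hb
    · exact (hs _ _ hbc).imp ih.tail id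
    · exact absurd hbc (hb _)

theorem not_transGen_self_of_terminal (hr : ∀ a, ¬ TransGen r a a)
    (hs : ∀ a b, s a b → r a b ∨ ∀ c, ¬ s b c) (a : α) : ¬ TransGen s a a := by
  intro h
  rcases transGen_or_terminal hs h with h' | ha
  · exact hr a h'
  · obtain ⟨c, hac, -⟩ := TransGen.head'_iff.1 h
    exact ha c hac

end Relation

/-- Asking for a successor of `b` lets `good` exclude dead ends, such as finished plays. -/
theorem not_forall_rel_apply_succ_of_rank {α β : Type*} [Preorder β] [WellFoundedLT β]
    {r : α → α → Prop} (good : α → Prop) (rank : α → β)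
    (hstep : ∀ a b c, good a → r a b → r b c → good b ∧ rank b < rank a)
    (g : ℕ → α) (h0 : good (g 0)) : ¬ ∀ i, r (g i) (g (i + 1)) := by
  intro h
  have hgood : ∀ i, good (g i) := fun i => by
    induction i with
    | zero => exact h0
    | succ i ih => exact (hstep _ _ _ ih (h i) (h (i + 1))).1
  obtain ⟨n, hn⟩ := WellFounded.not_rel_apply_succ (r := (· < ·)) (rank ∘ g)
  exact hn (hstep _ _ _ (hgood n) (h n) (h (n + 1))).2

theorem ite_union_ite_swap {α : Type*} (c : Prop) [Decidable c] (s t : Set α) :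
    ((if c then s else t) ∪ if c then t else s) = s ∪ t := by
  split_ifs
  · rfl
  · exact Set.union_comm t s

theorem sum_union_erase_lt {ι : Type*} [DecidableEq ι] {U T : Finset ι} {w w' : ι → ℕ}
    {v : ι} (hv : v ∈ U) (hvT : v ∉ T) (hT : T.card ≤ 2) (hw : 0 < w v)
    (hsame : ∀ u ∈ U.erase v, u ∉ T → w' u = w u)
    (htarget : ∀ t ∈ T, (t ∈ U ∧ w' t = w t) ∨ 3 * w' t ≤ w v) :
    ∑ u ∈ T ∪ U.erase v, w' u < ∑ u ∈ U, w u := by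
  set T₂ := T.filter fun t => ¬ (t ∈ U ∧ w' t = w t)
  have hsplit : T ∪ U.erase v = T₂ ∪ (U.erase v \ T₂) := by
    ext u
    by_cases h₂ : u ∈ T₂
    · simp only [Finset.mem_union, h₂, true_or, iff_true]
      exact Or.inl (Finset.mem_filter.1 h₂).1
    · simp only [Finset.mem_union, h₂, false_or, Finset.mem_sdiff, not_false_eq_true, and_true]
      refine ⟨fun hu => hu.elim (fun huT => ?_) id, Or.inr⟩
      have hkeep : u ∈ U ∧ w' u = w u := by
        by_contra h
        exact h₂ (Finset.mem_filter.2 ⟨huT, h⟩)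
      exact Finset.mem_erase.2 ⟨fun huv => hvT (huv ▸ huT), hkeep.1⟩
  have hrest : ∑ u ∈ U.erase v \ T₂, w' u ≤ ∑ u ∈ U.erase v, w u := by
    calc ∑ u ∈ U.erase v \ T₂, w' u = ∑ u ∈ U.erase v \ T₂, w u := by
          refine Finset.sum_congr rfl fun u hu => ?_
          simp only [T₂, Finset.mem_sdiff, Finset.mem_filter] at hu
          by_cases huT : u ∈ T
          · by_contra h
            exact hu.2 ⟨huT, fun h' => h h'.2⟩
          · exact hsame u hu.1 huT
      _ ≤ ∑ u ∈ U.erase v, w u := Finset.sum_le_sum_of_subset Finset.sdiff_subset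
  have hnew : 3 * ∑ u ∈ T₂, w' u ≤ 2 * w v := by
    calc 3 * ∑ u ∈ T₂, w' u = ∑ u ∈ T₂, 3 * w' u := Finset.mul_sum _ _ _
      _ ≤ T₂.card * w v := by
          simpa using Finset.sum_le_card_nsmul T₂ _ (w v) fun t ht => by
            simp only [T₂, Finset.mem_filter] at ht
            exact (htarget t ht.1).resolve_left ht.2
      _ ≤ 2 * w v := Nat.mul_le_mul_right _ ((Finset.card_filter_le _ _).trans hT)
  calc ∑ u ∈ T ∪ U.erase v, w' u
      = ∑ u ∈ T₂, w' u + ∑ u ∈ U.erase v \ T₂, w' u := by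
        rw [hsplit, Finset.sum_union Finset.disjoint_sdiff]
    _ < w v + ∑ u ∈ U.erase v, w u := by omega
    _ = ∑ u ∈ U, w u := Finset.add_sum_erase U w hv

def descendants (E : Finset (ℕ × ℕ)) (v : ℕ) : Set ℕ :=
  {u | Relation.TransGen (fun a b => (a, b) ∈ E) v u}

theorem descendants_subset_image_snd (E : Finset (ℕ × ℕ)) (v : ℕ) :
    descendants E v ⊆ E.image Prod.snd := by
  intro u hu
  induction hu with
  | single h => exact Finset.mem_image_of_mem _ h
  | tail _ h => exact Finset.mem_image_of_mem _ h

theorem finite_descendants (E : Finset (ℕ × ℕ)) (v : ℕ) : (descendants E v).Finite :=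
  (E.image Prod.snd).finite_toSet.subset (descendants_subset_image_snd E v)

theorem ncard_descendants_le (E : Finset (ℕ × ℕ)) (v : ℕ) :
    (descendants E v).ncard ≤ E.card :=
  calc (descendants E v).ncard ≤ (E.image Prod.snd : Set ℕ).ncard :=
        Set.ncard_le_ncard (descendants_subset_image_snd E v) (Finset.finite_toSet _)
    _ = (E.image Prod.snd).card := Set.ncard_coe_finset _
    _ ≤ E.card := Finset.card_image_le

theorem ncard_descendants_lt_of_mem {E : Finset (ℕ × ℕ)} {v t : ℕ}
    (hac : t ∉ descendants E t) (he : (v, t) ∈ E) :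
    (descendants E t).ncard < (descendants E v).ncard := by
  refine Set.ncard_lt_ncard ⟨fun u hu => Relation.TransGen.head he hu, fun h => hac ?_⟩
    (finite_descendants E v)
  exact h (Relation.TransGen.single he)

theorem exponent_lt_of_mem {E : Finset (ℕ × ℕ)} {v t b c : ℕ} (hac : t ∉ descendants E t)
    (he : (v, t) ∈ E) (hb : b ≤ c) :
    (E.card + 1) * b + (descendants E t).ncard <
      (E.card + 1) * c + (descendants E v).ncard := by
  have := ncard_descendants_lt_of_mem hac he
  have := Nat.mul_le_mul_left (E.card + 1) hb
  omega

theorem exponent_lt_of_lt {E : Finset (ℕ × ℕ)} (v t : ℕ) {b c : ℕ} (hb : b < c) :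
    (E.card + 1) * b + (descendants E t).ncard <
      (E.card + 1) * c + (descendants E v).ncard := by
  have := ncard_descendants_le E t
  have h := Nat.mul_le_mul_left (E.card + 1) (Nat.succ_le_of_lt hb)
  rw [Nat.mul_succ] at h
  omega

namespace FSPos

variable {P : Type}

/-- Since `sSup ∅ = 0` in `ℕ`, a node without models has maximal clock `0`. -/
noncomputable def maxClock (p : FSPos P) (v : ℕ) : ℕ :=
  sSup (Prod.snd '' (p.left v ∪ p.right v))

theorem le_maxClock (p : FSPos P) {v : ℕ} {x : CModel P} (hx : x ∈ p.left v ∪ p.right v) :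
    x.2 ≤ p.maxClock v :=
  le_csSup (((p.finL v).union (p.finR v)).image _).bddAbove ⟨x, hx, rfl⟩

theorem maxClock_le {p : FSPos P} {v m : ℕ} (h : ∀ x ∈ p.left v ∪ p.right v, x.2 ≤ m) :
    p.maxClock v ≤ m :=
  csSup_le' (by rintro _ ⟨x, hx, rfl⟩; exact h x hx)

theorem le_maxClock_of_subset_left (p : FSPos P) {v : ℕ} {S : Set (CModel P)}
    (hS : S ⊆ p.left v) : ∀ x ∈ S ∪ p.right v, x.2 ≤ p.maxClock v :=
  fun _ hx => p.le_maxClock (Set.union_subset_union_left _ hS hx)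

theorem le_maxClock_of_subset_right (p : FSPos P) {v : ℕ} {S : Set (CModel P)}
    (hS : S ⊆ p.right v) : ∀ x ∈ p.left v ∪ S, x.2 ≤ p.maxClock v :=
  fun _ hx => p.le_maxClock (Set.union_subset_union_right _ hS hx)

theorem maxClock_union {p q : FSPos P} {t b : ℕ} {L R : Set (CModel P)}
    (hL : q.left t = L ∪ p.left t) (hR : q.right t = R ∪ p.right t)
    (hb : ∀ x ∈ L ∪ R, x.2 ≤ b) :
    p.maxClock t ≤ q.maxClock t ∧ q.maxClock t ≤ max b (p.maxClock t) := by
  constructor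
  · refine maxClock_le fun x hx => q.le_maxClock ?_
    rw [hL, hR]
    rcases hx with hx | hx
    · exact Or.inl (Or.inr hx)
    · exact Or.inr (Or.inr hx)
  · refine maxClock_le fun x hx => ?_
    rw [hL, hR] at hx
    rcases hx with (hx | hx) | (hx | hx)
    · exact le_max_of_le_left (hb x (Or.inl hx))
    · exact le_max_of_le_right (p.le_maxClock (Or.inl hx))
    · exact le_max_of_le_left (hb x (Or.inr hx))
    · exact le_max_of_le_right (p.le_maxClock (Or.inr hx))

/-- As the number of descendants is at most `|E|`, the exponent orders the nodes
lexicographically by maximal clock, then by number of descendants; base `3` makes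
the sum of weights drop when a node is replaced by at most two lighter ones. -/
noncomputable def weight (p : FSPos P) (v : ℕ) : ℕ :=
  3 ^ ((p.E.card + 1) * p.maxClock v + (descendants p.E v).ncard)

noncomputable def activeWeight (p : FSPos P) : ℕ := ∑ v ∈ p.U, p.weight v

structure Valid (p : FSPos P) : Prop where
  active_subset : p.U ⊆ p.V
  mem_of_mem_edges : ∀ e ∈ p.E, e.1 ∈ p.V ∧ e.2 ∈ p.V
  not_mem_descendants : ∀ v, v ∉ descendants p.E v
  clock_eq_zero : ∀ v ∉ p.U, ∀ x ∈ p.left v ∪ p.right v, x.2 = 0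
  one_le_cost : ∀ v μ, p.lab v = some μ → 1 ≤ μ.cost

theorem Valid.mem_active_of_maxClock_pos {p : FSPos P} (hp : p.Valid) {v : ℕ}
    (h : 0 < p.maxClock v) : v ∈ p.U := by
  by_contra hv
  have : p.maxClock v ≤ 0 := maxClock_le fun x hx => (hp.clock_eq_zero v hv x hx).le
  omega

theorem Valid.card_le_size {p : FSPos P} (hp : p.Valid) : p.V.card ≤ p.size := by
  have hsum : p.V.card ≤ ∑ v ∈ p.V, (p.lab v).elim 1 FSLabel.cost := by
    simpa using Finset.card_nsmul_le_sum p.V (fun v => (p.lab v).elim 1 FSLabel.cost) 1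
      fun v _ => by
      cases hv : p.lab v with
      | none => simp
      | some μ => exact hp.one_le_cost v μ hv
  exact hsum.trans (Nat.le_add_right _ _)

theorem Valid.weight_eq_or_three_mul_weight_le {p q : FSPos P} (hp : p.Valid) (hE : q.E = p.E)
    {v t b : ℕ}
    (hclock : p.maxClock t ≤ q.maxClock t ∧ q.maxClock t ≤ max b (p.maxClock t))
    (hexp : (p.E.card + 1) * b + (descendants p.E t).ncard <
      (p.E.card + 1) * p.maxClock v + (descendants p.E v).ncard) :
    (t ∈ p.U ∧ q.weight t = p.weight t) ∨ 3 * q.weight t ≤ p.weight v := by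
  unfold weight
  rw [hE]
  rcases le_or_gt (q.maxClock t) b with hle | hlt
  · right
    rw [← pow_succ']
    refine Nat.pow_le_pow_right (by norm_num) ?_
    have := Nat.mul_le_mul_left (p.E.card + 1) hle
    omega
  · left
    have heq : q.maxClock t = p.maxClock t := by
      have := hclock.2
      rw [le_max_iff] at this
      omega
    exact ⟨hp.mem_active_of_maxClock_pos (by omega), by rw [heq]⟩

/-- The budget `k + 1 - |V|` is truncated; it decreases with `|V|` as long as `|V| ≤ k`,
which the game guarantees whenever Delilah picks a node. -/
noncomputable def rank (k : ℕ) (p : FSPos P) : ℕ ×ₗ ℕ :=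
  toLex (k + 1 - p.V.card, p.activeWeight)

theorem rank_lt_of_card_lt {k : ℕ} {p q : FSPos P} (hk : p.V.card ≤ k)
    (h : p.V.card < q.V.card) : q.rank k < p.rank k :=
  Prod.Lex.toLex_lt_toLex.2 (Or.inl (by omega))

theorem rank_lt_of_activeWeight_lt {k : ℕ} {p q : FSPos P} (hV : q.V = p.V)
    (h : q.activeWeight < p.activeWeight) : q.rank k < p.rank k :=
  Prod.Lex.toLex_lt_toLex.2 (Or.inr ⟨by rw [hV], h⟩)

structure Dispatch (p q : FSPos P) (v : ℕ) (T : Finset ℕ) : Prop where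
  not_mem : v ∉ T
  active_eq : q.U = T ∪ p.U.erase v
  left_eq : ∀ u, u ≠ v → u ∉ T → q.left u = p.left u
  right_eq : ∀ u, u ≠ v → u ∉ T → q.right u = p.right u
  clock_eq_zero : ∀ x ∈ q.left v ∪ q.right v, x.2 = 0

namespace Dispatch

variable {p q : FSPos P} {v : ℕ} {T : Finset ℕ}

theorem clock_eq_zero_of_not_mem_active (hd : Dispatch p q v T) (hp : p.Valid) :
    ∀ u ∉ q.U, ∀ x ∈ q.left u ∪ q.right u, x.2 = 0 := by
  intro u hu x hx
  rw [hd.active_eq, Finset.mem_union, Finset.mem_erase, not_or, not_and_or] at hu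
  by_cases huv : u = v
  · exact hd.clock_eq_zero x (huv ▸ hx)
  · rw [hd.left_eq u huv hu.1, hd.right_eq u huv hu.1] at hx
    exact hp.clock_eq_zero u (hu.2.resolve_left (not_not.2 huv)) x hx

theorem activeWeight_lt (hd : Dispatch p q v T) (hp : p.Valid) (hv : v ∈ p.U)
    (hE : q.E = p.E) (hT : T.card ≤ 2) (b : ℕ)
    (hclock : ∀ t ∈ T, p.maxClock t ≤ q.maxClock t ∧ q.maxClock t ≤ max b (p.maxClock t))
    (hexp : ∀ t ∈ T, (p.E.card + 1) * b + (descendants p.E t).ncard <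
      (p.E.card + 1) * p.maxClock v + (descendants p.E v).ncard) :
    q.activeWeight < p.activeWeight := by
  unfold activeWeight
  rw [hd.active_eq]
  refine sum_union_erase_lt hv hd.not_mem hT (pow_pos (by norm_num) _) ?_
    fun t ht => hp.weight_eq_or_three_mul_weight_le hE (hclock t ht) (hexp t ht)
  intro u hu huT
  unfold weight maxClock
  rw [hE, hd.left_eq u (Finset.ne_of_mem_erase hu) huT,
    hd.right_eq u (Finset.ne_of_mem_erase hu) huT]

end Dispatch

theorem Valid.of_dispatch {p q : FSPos P} {v : ℕ} {T : Finset ℕ} (hp : p.Valid) (hv : v ∈ p.U)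
    (hd : Dispatch p q v T) (hV : p.V ⊆ q.V) (hT : T ⊆ q.V)
    (hE : ∀ e ∈ q.E, e ∈ p.E ∨ (e.1 = v ∧ e.2 ∈ q.V ∧ e.2 ∉ p.V))
    (hcost : ∀ u μ, q.lab u = some μ → 1 ≤ μ.cost) : q.Valid where
  active_subset := by
    rw [hd.active_eq]
    exact Finset.union_subset hT
      (((Finset.erase_subset _ _).trans hp.active_subset).trans hV)
  mem_of_mem_edges e he := by
    rcases hE e he with he | ⟨he₁, he₂, -⟩
    · exact ⟨hV (hp.mem_of_mem_edges e he).1, hV (hp.mem_of_mem_edges e he).2⟩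
    · exact ⟨he₁ ▸ hV (hp.active_subset hv), he₂⟩
  not_mem_descendants := by
    refine Relation.not_transGen_self_of_terminal hp.not_mem_descendants fun a b hab => ?_
    rcases hE _ hab with hab | ⟨-, -, hb⟩
    · exact Or.inl hab
    · refine Or.inr fun c hbc => ?_
      rcases hE _ hbc with hbc | ⟨rfl, -, -⟩
      · exact hb (hp.mem_of_mem_edges _ hbc).1
      · exact hb (hp.active_subset hv)
  clock_eq_zero := hd.clock_eq_zero_of_not_mem_active hp
  one_le_cost := hcost

theorem Valid.one_le_cost_update {p : FSPos P} (hp : p.Valid) {v : ℕ} {μ : FSLabel P}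
    (hμ : 1 ≤ μ.cost) : ∀ u μ', Function.update p.lab v (some μ) u = some μ' → 1 ≤ μ'.cost := by
  intro u μ' h
  by_cases huv : u = v
  · subst huv
    rw [Function.update_self, Option.some_inj] at h
    exact h ▸ hμ
  · rw [Function.update_of_ne huv] at h
    exact hp.one_le_cost u μ' h

theorem Dispatch.of_extend1 {p q : FSPos P} {v v' : ℕ} {μ : FSLabel P} {L R : Set (CModel P)}
    (h : extend1 p q v v' μ L R) : Dispatch p q v {v'} := by
  obtain ⟨hne, -, -, hU, hleft, hright⟩ := h
  exact
    { not_mem := by simpa using hne.symm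
      active_eq := by rw [hU, Finset.insert_eq]
      left_eq := fun u hu hu' => by
        rw [hleft, Function.update_of_ne (by simpa using hu'), Function.update_of_ne hu]
      right_eq := fun u hu hu' => by
        rw [hright, Function.update_of_ne (by simpa using hu'), Function.update_of_ne hu]
      clock_eq_zero := by simp [hleft, hright, Function.update_of_ne hne.symm] }

theorem Valid.step_extend1 {k : ℕ} {p q : FSPos P} {v v' : ℕ} {μ : FSLabel P}
    {L R : Set (CModel P)} (hp : p.Valid) (hk : p.V.card ≤ k) (hv : v ∈ p.U)
    (h : extend1 p q v v' μ L R) (hμ : 1 ≤ μ.cost) (hb : ∀ x ∈ L ∪ R, x.2 ≤ p.maxClock v) :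
    q.Valid ∧ q.rank k < p.rank k := by
  have hd := Dispatch.of_extend1 h
  obtain ⟨-, hcase, -, -, hleft, hright⟩ := h
  have hL : q.left v' = L ∪ p.left v' := by rw [hleft, Function.update_self]
  have hR : q.right v' = R ∪ p.right v' := by rw [hright, Function.update_self]
  rcases hcase with ⟨-, hv'V, hV, hE, hlab, -⟩ | ⟨-, hedge, hV, hE, hlab, -⟩
  · refine ⟨hp.of_dispatch hv hd (hV ▸ Finset.subset_insert _ _) (by simp [hV]) ?_
      (hlab ▸ hp.one_le_cost_update hμ),
      rank_lt_of_card_lt hk (by rw [hV, Finset.card_insert_of_notMem hv'V]; omega)⟩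
    intro e he
    rw [hE, Finset.mem_insert] at he
    rcases he with rfl | he
    · exact Or.inr ⟨rfl, by simp [hV], hv'V⟩
    · exact Or.inl he
  · refine ⟨hp.of_dispatch hv hd (hV ▸ subset_rfl)
      (by simpa [hV] using (hp.mem_of_mem_edges _ hedge).2) (fun e he => Or.inl (hE ▸ he))
      (hlab ▸ hp.one_le_cost), rank_lt_of_activeWeight_lt hV ?_⟩
    have hexp := exponent_lt_of_mem (hp.not_mem_descendants v') hedge (le_refl (p.maxClock v))
    exact hd.activeWeight_lt hp hv hE (by simp) _ (by simpa using maxClock_union hL hR hb)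
      (by simpa using hexp)

theorem Dispatch.of_extend2 {p q : FSPos P} {v v₁ v₂ : ℕ} {μ : FSLabel P}
    {L₁ L₂ R₁ R₂ : Set (CModel P)} (h : extend2 p q v v₁ v₂ μ L₁ L₂ R₁ R₂) :
    Dispatch p q v {v₁, v₂} := by
  obtain ⟨-, h₁, h₂, -, -, hU, hleft, hright⟩ := h
  exact
    { not_mem := by simp [h₁.symm, h₂.symm]
      active_eq := by rw [hU, Finset.insert_union, ← Finset.insert_eq]
      left_eq := fun u hu hu' => by
        simp only [Finset.mem_insert, Finset.mem_singleton, not_or] at hu'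
        rw [hleft, Function.update_of_ne hu'.2, Function.update_of_ne hu'.1,
          Function.update_of_ne hu]
      right_eq := fun u hu hu' => by
        simp only [Finset.mem_insert, Finset.mem_singleton, not_or] at hu'
        rw [hright, Function.update_of_ne hu'.2, Function.update_of_ne hu'.1,
          Function.update_of_ne hu]
      clock_eq_zero := by
        simp [hleft, hright, Function.update_of_ne h₁.symm, Function.update_of_ne h₂.symm] }

theorem Valid.step_extend2 {k : ℕ} {p q : FSPos P} {v v₁ v₂ : ℕ} {μ : FSLabel P}
    {L₁ L₂ R₁ R₂ : Set (CModel P)} (hp : p.Valid) (hk : p.V.card ≤ k) (hv : v ∈ p.U)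
    (h : extend2 p q v v₁ v₂ μ L₁ L₂ R₁ R₂) (hμ : 1 ≤ μ.cost)
    (hb₁ : ∀ x ∈ L₁ ∪ R₁, x.2 ≤ p.maxClock v) (hb₂ : ∀ x ∈ L₂ ∪ R₂, x.2 ≤ p.maxClock v) :
    q.Valid ∧ q.rank k < p.rank k := by
  have hd := Dispatch.of_extend2 h
  obtain ⟨h₁₂, -, -, hcase, -, -, hleft, hright⟩ := h
  have hL₁ : q.left v₁ = L₁ ∪ p.left v₁ := by
    rw [hleft, Function.update_of_ne h₁₂, Function.update_self]
  have hR₁ : q.right v₁ = R₁ ∪ p.right v₁ := by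
    rw [hright, Function.update_of_ne h₁₂, Function.update_self]
  have hL₂ : q.left v₂ = L₂ ∪ p.left v₂ := by rw [hleft, Function.update_self]
  have hR₂ : q.right v₂ = R₂ ∪ p.right v₂ := by rw [hright, Function.update_self]
  rcases hcase with ⟨-, hv₁V, hv₂V, hV, hE, hlab, -⟩ | ⟨-, hedge₁, hedge₂, hV, hE, hlab, -⟩
  · have hsub : p.V ⊆ q.V := by
      rw [hV]
      exact (Finset.subset_insert _ _).trans (Finset.subset_insert _ _)
    have hcard : p.V.card < q.V.card := by
      rw [hV, Finset.card_insert_of_notMem (by simp [h₁₂, hv₁V])]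
      exact Nat.lt_succ_of_le (Finset.card_le_card (Finset.subset_insert _ _))
    refine ⟨hp.of_dispatch hv hd hsub (by simp [hV, Finset.insert_subset_iff]) ?_
      (hlab ▸ hp.one_le_cost_update hμ), rank_lt_of_card_lt hk hcard⟩
    intro e he
    rw [hE, Finset.mem_insert, Finset.mem_insert] at he
    rcases he with rfl | rfl | he
    · exact Or.inr ⟨rfl, by simp [hV], hv₁V⟩
    · exact Or.inr ⟨rfl, by simp [hV], hv₂V⟩
    · exact Or.inl he
  · refine ⟨hp.of_dispatch hv hd (hV ▸ subset_rfl)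
      (by simp [hV, Finset.insert_subset_iff, (hp.mem_of_mem_edges _ hedge₁).2,
        (hp.mem_of_mem_edges _ hedge₂).2]) (fun e he => Or.inl (hE ▸ he))
      (hlab ▸ hp.one_le_cost), rank_lt_of_activeWeight_lt hV ?_⟩
    refine hd.activeWeight_lt hp hv hE Finset.card_le_two (p.maxClock v) ?_ ?_
    all_goals simp only [Finset.mem_insert, Finset.mem_singleton, forall_eq_or_imp, forall_eq]
    · exact ⟨maxClock_union hL₁ hR₁ hb₁, maxClock_union hL₂ hR₂ hb₂⟩
    · exact ⟨exponent_lt_of_mem (hp.not_mem_descendants v₁) hedge₁ le_rfl,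
        exponent_lt_of_mem (hp.not_mem_descendants v₂) hedge₂ le_rfl⟩

theorem Dispatch.of_extendX {p q : FSPos P} {v v' X : ℕ} {isBase : Bool}
    {Lv' Rv' Lv Rv : Set (CModel P)} (h : extendX p q v v' X isBase Lv' Rv' Lv Rv)
    (hz : ∀ x ∈ Lv ∪ Rv, x.2 = 0) : Dispatch p q v {v'} := by
  obtain ⟨hne, -, -, -, -, hU, hleft, hright⟩ := h
  exact
    { not_mem := by simpa using hne.symm
      active_eq := by rw [hU, Finset.insert_eq]
      left_eq := fun u hu hu' => by
        rw [hleft, Function.update_of_ne (by simpa using hu'), Function.update_of_ne hu]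
      right_eq := fun u hu hu' => by
        rw [hright, Function.update_of_ne (by simpa using hu'), Function.update_of_ne hu]
      clock_eq_zero := by
        rw [hleft, hright, Function.update_of_ne hne.symm, Function.update_of_ne hne.symm,
          Function.update_self, Function.update_self]
        exact hz }

theorem Valid.of_extendX {p q : FSPos P} {v v' X : ℕ} {isBase : Bool}
    {Lv' Rv' Lv Rv : Set (CModel P)} (hp : p.Valid) (hv : v ∈ p.U)
    (h : extendX p q v v' X isBase Lv' Rv' Lv Rv) (hz : ∀ x ∈ Lv ∪ Rv, x.2 = 0) : q.Valid := by
  have hd := Dispatch.of_extendX h hz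
  obtain ⟨-, hcase, hE, -, hlab, -⟩ := h
  have hcost := hlab ▸ hp.one_le_cost_update (μ := .var X) le_rfl
  rcases hcase with ⟨hv'V, -, hV, -⟩ | ⟨-, hV, -⟩
  · exact hp.of_dispatch hv hd (hV ▸ subset_rfl) (by simpa [hV] using hv'V)
      (fun e he => Or.inl (hE ▸ he)) hcost
  · exact hp.of_dispatch hv hd (hV ▸ Finset.subset_insert _ _) (by simp [hV])
      (fun e he => Or.inl (hE ▸ he)) hcost

theorem clock_lt_maxClock_of_mem_iterC (p : FSPos P) {v : ℕ} {x : CModel P}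
    (hx : x ∈ iterC (p.left v) ∪ iterC (p.right v)) : x.2 < p.maxClock v :=
  p.le_maxClock (x := (x.1, x.2 + 1)) hx

theorem Valid.step_xNoChal {k : ℕ} {p q : FSPos P} {v v' X : ℕ} (hp : p.Valid)
    (hk : p.V.card ≤ k) (hv : v ∈ p.U)
    (hne : ¬ (iterC (p.left v) = ∅ ∧ iterC (p.right v) = ∅))
    (h : extendX p q v v' X false (iterC (p.left v) ∪ p.left v')
      (iterC (p.right v) ∪ p.right v') (initC (p.left v)) (initC (p.right v))) :
    q.Valid ∧ q.rank k < p.rank k := by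
  have hz : ∀ x ∈ initC (p.left v) ∪ initC (p.right v), x.2 = 0 := by
    rintro x (hx | hx) <;> exact hx.2
  refine ⟨hp.of_extendX hv h hz, ?_⟩
  have hd := Dispatch.of_extendX h hz
  have hpos : 0 < p.maxClock v := by
    obtain ⟨x, hx⟩ : (iterC (p.left v) ∪ iterC (p.right v)).Nonempty := by
      rw [Set.nonempty_iff_ne_empty, Ne, Set.union_empty_iff]
      exact hne
    exact (Nat.zero_le _).trans_lt (p.clock_lt_maxClock_of_mem_iterC hx)
  obtain ⟨-, hcase, hE, -, -, -, hleft, hright⟩ := h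
  have hL : q.left v' = iterC (p.left v) ∪ p.left v' := by
    rw [hleft, Function.update_self]
  have hR : q.right v' = iterC (p.right v) ∪ p.right v' := by
    rw [hright, Function.update_self]
  have hclock := maxClock_union (b := p.maxClock v - 1) hL hR fun x hx => by
    have := p.clock_lt_maxClock_of_mem_iterC hx
    omega
  rcases hcase with ⟨-, -, hV, -⟩ | ⟨hv'V, hV, -⟩
  · have hexp := exponent_lt_of_lt (E := p.E) v v' (Nat.sub_lt hpos Nat.one_pos)
    exact rank_lt_of_activeWeight_lt hV
      (hd.activeWeight_lt hp hv hE (by simp) _ (by simpa using hclock) (by simpa using hexp))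
  · exact rank_lt_of_card_lt hk (by rw [hV, Finset.card_insert_of_notMem hv'V]; omega)

theorem Valid.step_xChal {k : ℕ} {p q : FSPos P} {v v' X : ℕ} (hp : p.Valid)
    (hk : p.V.card ≤ k) (hv : v ∈ p.U) (hfresh : v' ∉ p.V)
    (h : extendX p q v v' X true (initC (p.left v)) (initC (p.right v)) ∅ ∅) :
    q.Valid ∧ q.rank k < p.rank k := by
  refine ⟨hp.of_extendX hv h (by simp), rank_lt_of_card_lt hk ?_⟩
  obtain ⟨-, ⟨hv'V, -⟩ | ⟨-, hV, -⟩, -⟩ := h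
  · exact absurd hv'V hfresh
  · rw [hV, Finset.card_insert_of_notMem hfresh]
    omega

theorem valid_of_setup {p : FSPos P} (hU : p.U = p.V) (hE : p.E = ∅)
    (hlab : ∀ n, p.lab n = none) (hleft : ∀ v ∉ p.U, p.left v = ∅)
    (hright : ∀ v ∉ p.U, p.right v = ∅) : p.Valid where
  active_subset := hU.le
  mem_of_mem_edges := by simp [hE]
  not_mem_descendants v hv := by
    obtain ⟨w, hw, -⟩ := Relation.TransGen.head'_iff.1 hv
    simp [hE] at hw
  clock_eq_zero v hv := by simp [hleft v hv, hright v hv]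
  one_le_cost := by simp [hlab]

end FSPos

theorem clock_eq_of_mem_baseFun {P : Type} {mk : ModKind} {x z : CModel P}
    (hz : z ∈ mk.baseFun x) : z.2 = x.2 := by
  unfold ModKind.baseFun at hz
  split at hz
  · obtain ⟨w, -, rfl⟩ := hz
    rfl
  · obtain ⟨w, rfl⟩ := hz
    rfl

theorem FSPos.le_maxClock_of_mem_baseFun {P : Type} (p : FSPos P) {v : ℕ} {mk : ModKind}
    {x z : CModel P} (hx : x ∈ p.left v ∪ p.right v) (hz : z ∈ mk.baseFun x) :
    z.2 ≤ p.maxClock v :=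
  clock_eq_of_mem_baseFun hz ▸ p.le_maxClock hx

theorem FSPos.clock_le_of_modal_reply {P : Type} (p : FSPos P) {v m : ℕ} {mk : ModKind}
    {f h : CModel P → Set (CModel P)} {D chosen : Set (CModel P)}
    (hf : ∀ x ∈ (if mk.samsonLeft then p.left v else p.right v), ∀ z ∈ f x, z.2 ≤ p.maxClock v)
    (hD : D ⊆ (if mk.samsonLeft then p.right v else p.left v)) (hh : IsMFun m D mk.baseFun h)
    (hch : chosen ⊆ ⋃ x ∈ (if mk.samsonLeft then p.left v else p.right v), f x) :
    ∀ z ∈ chosen ∪ ⋃ y ∈ D, h y, z.2 ≤ p.maxClock v := by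
  rintro z (hz | hz)
  · obtain ⟨x, hx, hzx⟩ := Set.mem_iUnion₂.1 (hch hz)
    exact hf x hx z hzx
  · obtain ⟨y, hy, hzy⟩ := Set.mem_iUnion₂.1 hz
    exact p.le_maxClock_of_mem_baseFun ((Set.union_comm _ _).subset
      (ite_le_sup (p.right v) (p.left v) _ (hD hy))) ((hh y hy).1 hzy)

theorem one_le_cost_label {P : Type} (mk : ModKind) {m : ℕ} (hm : 0 < m) :
    1 ≤ (mk.label m : FSLabel P).cost := by
  cases mk <;> exact hm

namespace GPos

variable {P : Type}

def Good (k : ℕ) : GPos P → Prop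
  | .start | .clockS _ | .chooseB _ | .setup _ _ => True
  | .main p => p.Valid
  | .atNode p v | .xchal p v _ => p.Valid ∧ p.V.card ≤ k ∧ v ∈ p.U
  | .modalD p v _ mk m f => (p.Valid ∧ p.V.card ≤ k ∧ v ∈ p.U) ∧ 0 < m ∧
      ∀ x ∈ (if mk.samsonLeft then p.left v else p.right v), ∀ z ∈ f x, z.2 ≤ p.maxClock v
  | .modalS p v _ _ m _ D h chosen => (p.Valid ∧ p.V.card ≤ k ∧ v ∈ p.U) ∧ 0 < m ∧
      ∀ z ∈ chosen ∪ ⋃ y ∈ D, h y, z.2 ≤ p.maxClock v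
  | .win _ => False

/-- Lexicographic: the rank of the forest position, then the number of micro-steps left
before the current move is completed. -/
noncomputable def rank (k : ℕ) : GPos P → (ℕ ×ₗ ℕ) ×ₗ ℕ
  | .start => toLex (toLex (k + 2, 0), 3)
  | .clockS _ => toLex (toLex (k + 2, 0), 2)
  | .chooseB _ => toLex (toLex (k + 2, 0), 1)
  | .setup _ _ => toLex (toLex (k + 2, 0), 0)
  | .main p => toLex (p.rank k, 4)
  | .atNode p _ => toLex (p.rank k, 3)
  | .modalD p _ _ _ _ _ | .xchal p _ _ => toLex (p.rank k, 2)
  | .modalS p _ _ _ _ _ _ _ _ => toLex (p.rank k, 1)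
  | .win _ => toLex (toLex (0, 0), 0)

theorem Good.step {k : ℕ} {A B : Set (PModel P)} {g g' g'' : GPos P} (hg : g.Good k)
    (h : gstep k A B g g') (h' : gstep k A B g' g'') : g'.Good k ∧ g'.rank k < g.rank k := by
  have micro {r : ℕ ×ₗ ℕ} {i j : ℕ} (hij : i < j) : toLex (r, i) < toLex (r, j) :=
    Prod.Lex.toLex_lt_toLex.2 (.inr ⟨rfl, hij⟩)
  have forest {p q : FSPos P} {i j : ℕ} (hpq : q.Valid ∧ q.rank k < p.rank k) :
      (main q).Good k ∧ toLex (q.rank k, i) < toLex (p.rank k, j) :=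
    ⟨hpq.1, Prod.Lex.toLex_lt_toLex.2 (.inl hpq.2)⟩
  cases h with
  | start | clock | chooseB => exact ⟨trivial, micro (by norm_num)⟩
  | setup cA cB p hU hE _ hlab _ _ _ hleft _ hright =>
    exact ⟨FSPos.valid_of_setup hU hE hlab hleft hright,
      Prod.Lex.toLex_lt_toLex.2 (.inl (Prod.Lex.toLex_lt_toLex.2 (.inl (by omega))))⟩
  | samsonLoses | sigMove | xWin => cases h'
  | pick p v hv hlose =>
    have hsize : p.size ≤ k := not_lt.1 (not_or.1 hlose).1
    exact ⟨⟨hg, hg.card_le_size.trans hsize, hv⟩, micro (by norm_num)⟩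
  | negMove p q v v' hext =>
    obtain ⟨hp, hk, hv⟩ := hg
    exact forest (hp.step_extend1 hk hv hext le_rfl fun x hx =>
      p.le_maxClock (Set.union_comm _ _ ▸ hx))
  | orMove p q v v₁ v₂ L₁ L₂ hsplit hext =>
    obtain ⟨hp, hk, hv⟩ := hg
    exact forest (hp.step_extend2 hk hv hext le_rfl
      (p.le_maxClock_of_subset_left (hsplit ▸ Set.subset_union_left))
      (p.le_maxClock_of_subset_left (hsplit ▸ Set.subset_union_right)))
  | andMove p q v v₁ v₂ R₁ R₂ hsplit hext =>
    obtain ⟨hp, hk, hv⟩ := hg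
    exact forest (hp.step_extend2 hk hv hext le_rfl
      (p.le_maxClock_of_subset_right (hsplit ▸ Set.subset_union_left))
      (p.le_maxClock_of_subset_right (hsplit ▸ Set.subset_union_right)))
  | modalMoveS p v v' mk m f hm _ hf =>
    exact ⟨⟨hg, hm, fun x hx z hz => p.le_maxClock_of_mem_baseFun
      (ite_le_sup (p.left v) (p.right v) _ hx) ((hf x hx).1 hz)⟩, micro (by norm_num)⟩
  | modalMoveD p v v' mk m f D h chosen hD hh _ hch =>
    exact ⟨⟨hg.1, hg.2.1, p.clock_le_of_modal_reply hg.2.2 hD hh hch⟩, micro (by norm_num)⟩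
  | modalMoveS2 p q v v' mk m f D h chosen r hr hext =>
    obtain ⟨⟨hp, hk, hv⟩, hm, hb⟩ := hg
    have hsub : (⋃ y ∈ D, r y) ⊆ ⋃ y ∈ D, h y := Set.iUnion₂_mono fun y hy => (hr y hy).1
    refine forest (hp.step_extend1 hk hv hext (one_le_cost_label mk hm) fun x hx => hb x ?_)
    rw [ite_union_ite_swap] at hx
    exact Set.union_subset_union_right _ hsub hx
  | xMove p v X _ _ => exact ⟨hg, micro (by norm_num)⟩
  | xNoChal p q v v' X hne hext =>
    obtain ⟨hp, hk, hv⟩ := hg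
    exact forest (hp.step_xNoChal hk hv hne hext)
  | xChal p q v v' X hfresh hext =>
    obtain ⟨hp, hk, hv⟩ := hg
    exact forest (hp.step_xChal hk hv hfresh hext)

end GPos

/-- Every play of the formula size game `FS^Π_k(𝔸,𝔹)` is
finite: there is no infinite sequence of game positions starting from the
starting position in which each position is followed by a legal move. -/
theorem fs_game_plays_finite (P : Type) (k : ℕ) (A B : Set (PModel P)) :
    ¬ ∃ g : ℕ → GPos P, g 0 = .start ∧ ∀ i : ℕ, gstep k A B (g i) (g (i + 1)) := by
  rintro ⟨g, h0, hplay⟩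
  refine not_forall_rel_apply_succ_of_rank (GPos.Good k) (GPos.rank k)
    (fun _ _ _ ha hab hbc => ha.step hab hbc) g ?_ hplay
  rw [h0]
  trivial
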